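/- arXiv:2103.00403 — 2 statements merged into one kernel-verified Lean document; each statement's English description precedes it below -/
import Mathlib

section
/- If G is a 2-cograph and e is an edge of G, then the simple contraction G/e is a 2-cograph. -/
/-!
Suppose `(G/uv)[S]` and its complement are 2-connected. If the merged vertex is not in `S`, this
graph is an induced subgraph of `G`; otherwise it is `G[T]/uv` for `T = S ∪ {v}`, so it suffices to
show that no contraction `K/uv` of a 2-cograph `K` is 2-connected together with its complement.
If `N(v) - u ⊆ N(u)` then `K/uv ≅ K - v`, and if `N(u) - v ⊆ N(v)` then `K/uv ≅ K - u`. Otherwise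
pick `b ∈ N(v) - N(u)` and `c ∈ N(u) - N(v)`: then `K` and `Kᶜ` are 2-connected themselves.
Indeed, `(K/uv) - w` maps into `K - w` (through `v` where the merged vertex uses an edge of `v`)
and `(K/uv)ᶜ - w` into `Kᶜ - w`, each missing one vertex of the target, which is reattached by `b`,
by `c`, or by a neighbour of the merged vertex in `(K/uv)ᶜ - w`.
-/

/-- A graph is 2-connected if it has at least 3 vertices, is connected,
and remains connected after deleting any single vertex. -/
def TwoConnected {V : Type} [Fintype V] (G : SimpleGraph V) : Prop :=
  3 ≤ Fintype.card V ∧ G.Connected ∧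
    ∀ v : V, (G.induce ({v}ᶜ : Set V)).Connected

/-- A graph is a 2-cograph if it has no induced subgraph `H` such that
both `H` and its complement are 2-connected. -/
def IsTwoCograph {V : Type} [Fintype V] (G : SimpleGraph V) : Prop :=
  ∀ S : Finset V, ¬ (TwoConnected (G.induce (S : Set V)) ∧
      TwoConnected ((G.induce (S : Set V))ᶜ))

/-- The simple contraction `G/uv`: the vertex `v` is removed and `u` plays
the role of the merged vertex. -/
def contractEdge {V : Type} (G : SimpleGraph V) (u v : V) :
    SimpleGraph {x : V // x ≠ v} :=
  SimpleGraph.fromRel fun a b =>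
    G.Adj a b ∨ ((a : V) = u ∧ G.Adj v b) ∨ ((b : V) = u ∧ G.Adj v (a : V))

open SimpleGraph

section General

variable {V W : Type*} {G : SimpleGraph V}

lemma exists_ne_ne_of_three_le_card [Fintype V] (h : 3 ≤ Fintype.card V) (x y : V) :
    ∃ z, z ≠ x ∧ z ≠ y := by
  classical
  have hlt : ({x, y} : Finset V).card < (Finset.univ : Finset V).card :=
    Finset.card_le_two.trans_lt (by rw [Finset.card_univ]; omega)
  obtain ⟨z, -, hz⟩ := Finset.exists_mem_notMem_of_card_lt_card hlt
  simp only [Finset.mem_insert, Finset.mem_singleton, not_or] at hz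
  exact ⟨z, hz⟩

lemma Set.insert_compl_pair {a b : V} (h : a ≠ b) : insert b ({a, b}ᶜ : Set V) = {a}ᶜ := by
  ext x
  by_cases hx : x = b <;> simp [hx, h.symm]

lemma image_val_compl_singleton {v : V} (w : {x // x ≠ v}) :
    Subtype.val '' ({w}ᶜ : Set {x // x ≠ v}) = {(w : V), v}ᶜ := by
  ext x
  simp [Subtype.ext_iff]

def SimpleGraph.Iso.compl {H : SimpleGraph W} (e : G ≃g H) : Gᶜ ≃g Hᶜ where
  toEquiv := e.toEquiv
  map_rel_iff' := by simp [e.injective.ne_iff, e.map_adj_iff]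

lemma SimpleGraph.Reachable.of_forall_adj_reachable {G' : SimpleGraph V}
    (h : ∀ a b, G.Adj a b → G'.Reachable a b) {x y : V} (hxy : G.Reachable x y) :
    G'.Reachable x y := by
  rw [reachable_iff_reflTransGen] at hxy ⊢
  exact hxy.lift' id fun a b hab => (reachable_iff_reflTransGen a b).1 (h a b hab)

lemma SimpleGraph.Connected.of_forall_adj_reachable {G' : SimpleGraph V}
    (h : ∀ a b, G.Adj a b → G'.Reachable a b) (hG : G.Connected) : G'.Connected :=
  have := hG.nonempty
  ⟨fun x y => (hG.preconnected x y).of_forall_adj_reachable h⟩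

lemma SimpleGraph.Connected.induce_image {H : SimpleGraph W} (φ : G →g H) {s : Set V}
    (hs : (G.induce s).Connected) : (H.induce (φ '' s)).Connected :=
  hs.map (induceHom φ (Set.mapsTo_image φ s)) (Set.surjective_mapsTo_image_restrict φ s)

lemma SimpleGraph.Connected.induce_insert {s : Set V} {x y : V} (hs : (G.induce s).Connected)
    (hx : x ∈ s) (hxy : G.Adj x y) : (G.induce (insert y s)).Connected := by
  rw [Set.insert_eq]
  exact connected_induce_union Preconnected.of_subsingleton hs.preconnected rfl hx hxy.symm

end General

section TwoConnected

variable {α β : Type} [Fintype α] [Fintype β] {G : SimpleGraph α} {H : SimpleGraph β}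

lemma twoConnected_iff :
    TwoConnected G ↔ 3 ≤ Fintype.card α ∧ ∀ w, (G.induce {w}ᶜ).Connected := by
  refine ⟨fun h => ⟨h.1, h.2.2⟩, fun ⟨hcard, hdel⟩ => ⟨hcard, ?_, hdel⟩⟩
  have : Nonempty α := Fintype.card_pos_iff.1 (by omega)
  refine ⟨fun x y => ?_⟩
  obtain ⟨w, hwx, hwy⟩ := exists_ne_ne_of_three_le_card hcard x y
  exact ((hdel w).preconnected ⟨x, hwx.symm⟩ ⟨y, hwy.symm⟩).map (Embedding.induce _).toHom

lemma TwoConnected.of_iso (e : G ≃g H) (h : TwoConnected G) : TwoConnected H := by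
  rw [twoConnected_iff] at h ⊢
  refine ⟨Fintype.card_congr e.toEquiv ▸ h.1, fun w => ?_⟩
  have hbij : Set.BijOn e {e.symm w}ᶜ {w}ᶜ :=
    (Set.bijOn_singleton.2 (e.apply_symm_apply w)).compl e.bijective
  exact (e.induce hbij).connected_iff.1 (h.2 _)

lemma IsTwoCograph.not_of_isIndContained (hH : IsTwoCograph H) (hGH : G ⊴ H) :
    ¬ (TwoConnected G ∧ TwoConnected Gᶜ) := by
  classical
  obtain ⟨f⟩ := hGH
  let S := Finset.univ.map f.toEmbedding
  have hS : Set.BijOn id (Set.range f) (S : Set β) := by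
    convert Set.bijOn_id _
    simp [S]
  let e : G ≃g H.induce (S : Set β) := (Iso.refl.induce hS).comp f.isoInduceRange
  exact fun h => hH S ⟨h.1.of_iso e, h.2.of_iso e.compl⟩

lemma IsTwoCograph.of_isIndContained (hH : IsTwoCograph H) (hGH : G ⊴ H) : IsTwoCograph G :=
  fun S => hH.not_of_isIndContained (IsIndContained.trans ⟨Embedding.induce (S : Set α)⟩ hGH)

end TwoConnected

section Contraction

variable {V : Type} {K : SimpleGraph V} {u v : V}

def joinNeighbors (K : SimpleGraph V) (u v : V) : SimpleGraph V :=
  SimpleGraph.fromRel fun a b => K.Adj a b ∨ (a = u ∧ K.Adj v b)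

lemma contractEdge_eq_comap (K : SimpleGraph V) (u v : V) :
    contractEdge K u v = (joinNeighbors K u v).comap Subtype.val := by
  ext a b
  simp only [contractEdge, joinNeighbors, fromRel_adj, comap_adj, ne_eq, Subtype.ext_iff,
    K.adj_comm b a]
  tauto

lemma le_joinNeighbors : K ≤ joinNeighbors K u v :=
  fun _ _ h => (fromRel_adj ..).2 ⟨h.ne, Or.inl (Or.inl h)⟩

lemma joinNeighbors_adj_of_adj (hx : u ≠ x) (hvx : K.Adj v x) : (joinNeighbors K u v).Adj u x :=
  (fromRel_adj ..).2 ⟨hx, Or.inl (Or.inr ⟨rfl, hvx⟩)⟩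

lemma joinNeighbors_adj_of_ne {a b : V} (ha : a ≠ u) (hb : b ≠ u) :
    (joinNeighbors K u v).Adj a b ↔ K.Adj a b := by
  simp only [joinNeighbors, fromRel_adj, ha, hb, false_and, or_false, K.adj_comm b a, or_self,
    and_iff_right_iff_imp]
  exact Adj.ne

lemma joinNeighbors_eq_self (h : ∀ x, x ≠ u → K.Adj v x → K.Adj u x) :
    joinNeighbors K u v = K := by
  refine le_antisymm (fun a b hab => ?_) le_joinNeighbors
  obtain ⟨hne, (hab | ⟨rfl, hvb⟩) | (hba | ⟨rfl, hva⟩)⟩ := (fromRel_adj ..).1 hab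
  · exact hab
  · exact h b hne.symm hvb
  · exact hba.symm
  · exact (h a hne hva).symm

lemma joinNeighbors_comap_eq_swap [DecidableEq V] (h : ∀ x, x ≠ v → K.Adj u x → K.Adj v x) :
    (joinNeighbors K u v).comap (Subtype.val : {x // x ≠ v} → V) =
      K.comap (Equiv.swap u v ∘ Subtype.val) := by
  ext ⟨a, ha⟩ ⟨b, hb⟩
  simp only [joinNeighbors, comap_adj, fromRel_adj, Function.comp_apply, Equiv.swap_apply_def,
    if_neg ha, if_neg hb, K.adj_comm b a]
  split_ifs with hau hbu hbu <;> subst_vars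
  all_goals grind [Adj.ne, SimpleGraph.irrefl, SimpleGraph.adj_comm]

lemma SimpleGraph.Connected.induce_of_joinNeighbors (huv : K.Adj u v) {t : Set V}
    (ht : u ∈ t → v ∈ t) (h : ((joinNeighbors K u v).induce t).Connected) :
    (K.induce t).Connected := by
  have hstep : ∀ a b (ha : a ∈ t) (hb : b ∈ t), K.Adj a b ∨ (a = u ∧ K.Adj v b) →
      (K.induce t).Reachable ⟨a, ha⟩ ⟨b, hb⟩ := by
    rintro a b ha hb (hab | ⟨rfl, hvb⟩)
    · exact Adj.reachable hab
    · let v' : t := ⟨v, ht ha⟩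
      exact (Adj.reachable (v := v') huv).trans (Adj.reachable (u := v') hvb)
  refine h.of_forall_adj_reachable fun ⟨a, ha⟩ ⟨b, hb⟩ hab => ?_
  rcases ((fromRel_adj ..).1 (show (joinNeighbors K u v).Adj a b from hab)).2 with hab | hba
  exacts [hstep a b ha hb hab, (hstep b a hb ha hba).symm]

def contractEdgeInduceIso (K : SimpleGraph V) {S : Set {x // x ≠ v}} {T : Set V}
    (hST : ∀ x, x ∈ S ↔ ↑x ∈ T) (hu : u ∈ T) (hv : v ∈ T) :
    (contractEdge K u v).induce S ≃g contractEdge (K.induce T) ⟨u, hu⟩ ⟨v, hv⟩ where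
  toFun x := ⟨⟨x.1.1, (hST x.1).1 x.2⟩, fun h => x.1.2 (congrArg Subtype.val h)⟩
  invFun y := ⟨⟨y.1.1, fun h => y.2 (Subtype.ext h)⟩, (hST _).2 y.1.2⟩
  left_inv _ := rfl
  right_inv _ := rfl
  map_rel_iff' := by simp [contractEdge, Subtype.ext_iff]

lemma contractEdge_induce_isIndContained (K : SimpleGraph V) {S : Set {x // x ≠ v}}
    (hS : ∀ x ∈ S, (x : V) ≠ u) : (contractEdge K u v).induce S ⊴ K := by
  refine ⟨⟨(Function.Embedding.subtype _).trans (Function.Embedding.subtype _), fun {a b} => ?_⟩⟩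
  simp [contractEdge_eq_comap, joinNeighbors_adj_of_ne (hS a a.2) (hS b b.2)]

end Contraction

section Core

variable {V : Type} [Fintype V] [DecidableEq V] {K : SimpleGraph V} {u v b c : V}

lemma TwoConnected.connected_induce_compl_pair {G : SimpleGraph V} {H : SimpleGraph {x // x ≠ v}}
    (hH : TwoConnected H) (hHG : ∀ a b, H.Adj a b → G.Adj a b) (w : {x // x ≠ v}) :
    (G.induce {(w : V), v}ᶜ).Connected :=
  image_val_compl_singleton w ▸ (hH.2.2 w).induce_image ⟨Subtype.val, hHG _ _⟩

lemma twoConnected_of_twoConnected_contractEdge (huv : K.Adj u v) (hbu : b ≠ u)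
    (hvb : K.Adj v b) (hcv : c ≠ v) (huc : K.Adj u c) (hH : TwoConnected (contractEdge K u v)) :
    TwoConnected K := by
  have hpair (w : V) (hw : w ≠ v) : ((joinNeighbors K u v).induce {w, v}ᶜ).Connected :=
    hH.connected_induce_compl_pair (fun a b hab => by rwa [contractEdge_eq_comap] at hab) ⟨w, hw⟩
  have hKuv : (K.induce {u, v}ᶜ).Connected :=
    (hpair u huv.ne).induce_of_joinNeighbors huv (by simp)
  refine twoConnected_iff.2 ⟨hH.1.trans (Fintype.card_subtype_le _), fun w => ?_⟩
  rcases eq_or_ne w v with hwv | hwv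
  · rw [hwv, ← Set.insert_compl_pair huv.ne.symm, Set.pair_comm]
    exact hKuv.induce_insert (by simp [hcv, huc.ne.symm]) huc.symm
  rcases eq_or_ne w u with hwu | hwu
  · rw [hwu, ← Set.insert_compl_pair huv.ne]
    exact hKuv.induce_insert (by simp [hbu, hvb.ne.symm]) hvb.symm
  rw [← Set.insert_compl_pair hwv]
  refine ((hpair w hwv).induce_insert (by simp [hwu.symm, huv.ne]) (le_joinNeighbors huv))
    |>.induce_of_joinNeighbors huv (fun _ => by simp [hwv.symm])

lemma twoConnected_compl_of_twoConnected_compl_contractEdge (huv : K.Adj u v) (hbu : b ≠ u)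
    (hub : ¬K.Adj u b) (hcv : c ≠ v) (hvc : ¬K.Adj v c)
    (hH : TwoConnected (contractEdge K u v)ᶜ) : TwoConnected Kᶜ := by
  have hle (a b : {x // x ≠ v}) (hab : K.Adj a b) : (contractEdge K u v).Adj a b := by
    rw [contractEdge_eq_comap]
    exact le_joinNeighbors hab
  have hpair (w : V) (hw : w ≠ v) : (Kᶜ.induce {w, v}ᶜ).Connected :=
    hH.connected_induce_compl_pair (G := Kᶜ)
      (fun a b hab => ⟨fun h => hab.1 (Subtype.ext h), fun h => hab.2 (hle a b h)⟩) ⟨w, hw⟩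
  have hKuv : (Kᶜ.induce {u, v}ᶜ).Connected := hpair u huv.ne
  refine twoConnected_iff.2 ⟨hH.1.trans (Fintype.card_subtype_le _), fun w => ?_⟩
  rcases eq_or_ne w v with hwv | hwv
  · rw [hwv, ← Set.insert_compl_pair huv.ne.symm, Set.pair_comm]
    have hbv : b ≠ v := by rintro rfl; exact hub huv
    exact hKuv.induce_insert (x := b) (by simp [hbu, hbv]) ⟨hbu, fun h => hub h.symm⟩
  rcases eq_or_ne w u with hwu | hwu
  · rw [hwu, ← Set.insert_compl_pair huv.ne]
    have hcu : c ≠ u := by rintro rfl; exact hvc huv.symm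
    exact hKuv.induce_insert (x := c) (by simp [hcu, hcv]) ⟨hcv, fun h => hvc h.symm⟩
  let u' : {x // x ≠ v} := ⟨u, huv.ne⟩
  let w' : {x // x ≠ v} := ⟨w, hwv⟩
  have hu' : u' ∈ ({w'}ᶜ : Set _) := by simp [u', w', Subtype.ext_iff, hwu.symm]
  obtain ⟨z, hzu, hzw⟩ := exists_ne_ne_of_three_le_card hH.1 u' w'
  have : Nontrivial ({w'}ᶜ : Set _) :=
    nontrivial_of_ne ⟨u', hu'⟩ ⟨z, hzw⟩ fun h => hzu (congrArg Subtype.val h).symm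
  -- a neighbour of the merged vertex in the complement of `K/uv` is a non-neighbour of `v`
  obtain ⟨⟨x, hxw⟩, hux⟩ := (hH.2.2 w').preconnected.exists_adj_of_nontrivial ⟨u', hu'⟩
  have hvx : Kᶜ.Adj v x := by
    refine ⟨x.2.symm, fun h => hux.2 ?_⟩
    rw [contractEdge_eq_comap]
    exact joinNeighbors_adj_of_adj (fun h' => hux.1 (Subtype.ext h')) h
  rw [← Set.insert_compl_pair hwv]
  exact (hpair w hwv).induce_insert (by simpa [Subtype.ext_iff, x.2] using hxw) hvx.symm

end Core

section Main

variable {V : Type} [Fintype V] [DecidableEq V] {K : SimpleGraph V} {u v : V}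

theorem IsTwoCograph.not_twoConnected_contractEdge (hK : IsTwoCograph K) (huv : K.Adj u v) :
    ¬ (TwoConnected (contractEdge K u v) ∧ TwoConnected (contractEdge K u v)ᶜ) := by
  by_cases hvu : ∀ x, x ≠ u → K.Adj v x → K.Adj u x
  · rw [contractEdge_eq_comap, joinNeighbors_eq_self hvu]
    exact hK.not_of_isIndContained ⟨Embedding.comap (.subtype _) K⟩
  by_cases huv' : ∀ x, x ≠ v → K.Adj u x → K.Adj v x
  · rw [contractEdge_eq_comap, joinNeighbors_comap_eq_swap huv']
    exact hK.not_of_isIndContained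
      ⟨Embedding.comap ⟨_, (Equiv.injective _).comp Subtype.val_injective⟩ K⟩
  push Not at hvu huv'
  obtain ⟨b, hbu, hvb, hub⟩ := hvu
  obtain ⟨c, hcv, huc, hvc⟩ := huv'
  exact fun hH => hK.not_of_isIndContained (.refl K)
    ⟨twoConnected_of_twoConnected_contractEdge huv hbu hvb hcv huc hH.1,
      twoConnected_compl_of_twoConnected_compl_contractEdge huv hbu hub hcv hvc hH.2⟩

end Main

theorem contraction_of_twoCograph {V : Type} [Fintype V] [DecidableEq V]
    (G : SimpleGraph V) (hG : IsTwoCograph G) (u v : V) (h : G.Adj u v) :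
    IsTwoCograph (contractEdge G u v) := by
  intro S hS
  by_cases hu : ⟨u, h.ne⟩ ∈ S
  · let T : Finset V := insert v (S.image Subtype.val)
    have hST : ∀ x, x ∈ (S : Set {x // x ≠ v}) ↔ ↑x ∈ (T : Set V) := by
      rintro ⟨x, hx⟩
      simp [T, hx]
    have huT : u ∈ (T : Set V) := by simp [T, hu, h.ne]
    have hvT : v ∈ (T : Set V) := by simp [T]
    let e := contractEdgeInduceIso G hST huT hvT
    exact (hG.of_isIndContained ⟨Embedding.induce (T : Set V)⟩).not_twoConnected_contractEdge
      (show (G.induce T).Adj ⟨u, huT⟩ ⟨v, hvT⟩ from h) ⟨hS.1.of_iso e, hS.2.of_iso e.compl⟩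
  · refine hG.not_of_isIndContained (contractEdge_induce_isIndContained G fun x hx hxu => ?_) hS
    exact hu (by rwa [show x = ⟨u, h.ne⟩ from Subtype.ext hxu] at hx)
end

section
/- Let G be an induced-minor-minimal non-2-cograph. Then both G and its complement are 2-connected. -/
/-- `H` is an induced minor of `G`: witnessed by pairwise disjoint nonempty
connected branch sets, with adjacency in `H` iff there is an edge between
the corresponding branch sets. -/
def IsInducedMinor {V W : Type} (G : SimpleGraph V) (H : SimpleGraph W) : Prop :=
  ∃ B : W → Set V,
    (∀ w, (B w).Nonempty) ∧
    (∀ w, (G.induce (B w)).Connected) ∧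
    (Pairwise fun w w' => Disjoint (B w) (B w')) ∧
    ∀ w w', w ≠ w' → (H.Adj w w' ↔ ∃ a ∈ B w, ∃ b ∈ B w', G.Adj a b)

/-- `G` is an induced-minor-minimal non-2-cograph: `G` is not a 2-cograph but
every proper induced minor of `G` (one with fewer vertices) is a 2-cograph. -/
def IsIMMNon2Cograph {V : Type} [Fintype V] (G : SimpleGraph V) : Prop :=
  ¬ IsTwoCograph G ∧
    ∀ (W : Type) [Fintype W], ∀ H : SimpleGraph W,
      IsInducedMinor G H → Fintype.card W < Fintype.card V → IsTwoCograph H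

/-!
If `G` is not a 2-cograph, some induced subgraph `G[S]` has both `G[S]` and its complement
2-connected. Every induced subgraph is an induced minor (take singleton branch sets), and
`G[S]` is itself not a 2-cograph, so minimality forces `S` to be the whole vertex set.
-/

namespace SimpleGraph

variable {V W : Type}

lemma induce_compl (G : SimpleGraph V) (s : Set V) : (G.induce s)ᶜ = Gᶜ.induce s := by
  ext a b
  simp [Subtype.ext_iff]

lemma Iso.twoConnected [Fintype V] [Fintype W] {G : SimpleGraph V} {H : SimpleGraph W}
    (φ : G ≃g H) (hG : TwoConnected G) : TwoConnected H := by
  obtain ⟨hcard, hconn, hdel⟩ := hG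
  refine ⟨Fintype.card_congr φ.toEquiv ▸ hcard, φ.connected_iff.mp hconn,
    φ.surjective.forall.mpr fun u => ?_⟩
  exact (φ.induce ((Set.bijOn_singleton.mpr rfl).compl φ.bijective)).connected_iff.mp (hdel u)

lemma Iso.twoConnected_iff [Fintype V] [Fintype W] {G : SimpleGraph V} {H : SimpleGraph W}
    (φ : G ≃g H) : TwoConnected G ↔ TwoConnected H :=
  ⟨φ.twoConnected, φ.symm.twoConnected⟩

lemma twoConnected_induce_iff_of_eq_univ [Fintype V] (G : SimpleGraph V) {s : Set V}
    [Fintype s] (hs : s = Set.univ) : TwoConnected (G.induce s) ↔ TwoConnected G :=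
  Iso.twoConnected_iff ((Iso.refl.induce (hs ▸ Set.bijOn_id s)).trans G.induceUnivIso)

lemma isInducedMinor_induce (G : SimpleGraph V) (s : Set V) : IsInducedMinor G (G.induce s) := by
  refine ⟨fun w => {(w : V)}, fun w => Set.singleton_nonempty _, fun w => ?_, ?_, ?_⟩
  · rw [induce_singleton_eq_top]
    exact connected_top
  · intro w w' hne
    simpa [Subtype.ext_iff] using hne
  · intro w w' _
    simp

lemma not_isTwoCograph_of_twoConnected [Fintype V] {G : SimpleGraph V} (h : TwoConnected G)
    (hc : TwoConnected Gᶜ) : ¬ IsTwoCograph G := fun hG =>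
  hG Finset.univ ⟨(G.twoConnected_induce_iff_of_eq_univ Finset.coe_univ).mpr h, by
    rwa [induce_compl, Gᶜ.twoConnected_induce_iff_of_eq_univ Finset.coe_univ]⟩

end SimpleGraph

open SimpleGraph

theorem imm_non2cograph_twoConnected {V : Type} [Fintype V] (G : SimpleGraph V)
    (hG : IsIMMNon2Cograph G) : TwoConnected G ∧ TwoConnected Gᶜ := by
  obtain ⟨hnot, hmin⟩ := hG
  simp only [IsTwoCograph, not_forall, not_not] at hnot
  obtain ⟨S, hS, hSc⟩ := hnot
  have hS_univ : S = Finset.univ := by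
    by_contra hne
    have hlt : Fintype.card (S : Set V) < Fintype.card V := by
      simpa using (Finset.card_lt_iff_ne_univ S).mpr hne
    exact not_isTwoCograph_of_twoConnected hS hSc
      (hmin _ _ (G.isInducedMinor_induce S) hlt)
  subst hS_univ
  rw [induce_compl] at hSc
  exact ⟨(G.twoConnected_induce_iff_of_eq_univ Finset.coe_univ).mp hS,
    (Gᶜ.twoConnected_induce_iff_of_eq_univ Finset.coe_univ).mp hSc⟩
end
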